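/- arXiv:1309.5135 — 4 statements merged into one kernel-verified Lean document; each statement's English description precedes it below -/
import Mathlib

section
/- For any function g of polymorphic type forall b. (a -> b -> b) -> b -> b, and any k : a -> c -> c and z : c, we have foldr k z (build g) = g k z, where build g = g cons nil. -/
universe u

/-- `build g = g (::) []`. -/
def build {a : Type u} (g : ∀ b : Type u, (a → b → b) → b → b) : List a :=
  g (List a) List.cons List.nil

/-- Foldr-build: if `g` is parametric (expressed by its free theorem `hg`),
then `foldr k z (build g) = g k z`. -/
theorem foldr_build {a c : Type u}
    (g : ∀ b : Type u, (a → b → b) → b → b)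
    (hg : ∀ (b b' : Type u) (h : b → b') (k : a → b → b) (k' : a → b' → b')
        (z : b) (z' : b'),
        (∀ x y, h (k x y) = k' x (h y)) → h z = z' →
        h (g b k z) = g b' k' z')
    (k : a → c → c) (z : c) :
    List.foldr k z (build g) = g c k z :=
  hg (List a) c (List.foldr k z) List.cons k List.nil z (fun _ _ => rfl) rfl
end

section
/- In the stream model, run (fold xs c n) = foldr c n xs for any finite list xs, where fold [] c n = base n and fold (x::xs) c n = c x << fold xs c n. -/
universe u

/-- The stream model of hyperfunctions: infinite streams of functions `a → b`. -/
abbrev L (a b : Type u) : Type u := Stream' (a → b)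

/-- Stream cons `<<` / `:<<:`. -/
def scons {a b : Type u} (f : a → b) (s : L a b) : L a b := Stream'.cons f s

/-- Composition `#`, the unique solution of
`(f :<<: fs) # (g :<<: gs) = (f ∘ g) :<<: (fs # gs)`. -/
def hcomp {a b c : Type u} (f : L b c) (g : L a b) : L a c :=
  fun n => (f n) ∘ (g n)

/-- `lift f`, the unique solution of `lift f = f :<<: lift f`. -/
def hlift {a b : Type u} (f : a → b) : L a b := Stream'.const f

/-- `self = lift id`. -/
def hself {a : Type u} : L a a := hlift id
/-- `run`, as a partial function (here, a functional relation) on streams of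
endofunctions, defined where it exists: on eventually constant streams it
returns the eventual constant, and it satisfies `run (f :<<: fs) = f (run fs)`. -/
inductive Run {a : Type u} : L a a → a → Prop
  | const (s : L a a) (n : a) : (∀ m, s m = fun _ => n) → Run s n
  | step (s : L a a) (v : a) : Run s.tail v → Run s (s.head v)

/-- `base n = lift (const n)`. -/
def hbase {b c : Type u} (n : c) : L b c := hlift (fun _ => n)

/-- `fold` in the stream model. -/
def hfold {a b c : Type u} : List a → (a → b → c) → c → L b c
  | [], _, n => hbase n
  | x :: xs, c, n => scons (c x) (hfold xs c n)

/-- `run (fold xs c n) = foldr c n xs` for any finite list `xs`. -/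
theorem run_hfold {a b : Type u} (xs : List a) (c : a → b → b) (n : b) :
    Run (hfold xs c n) (List.foldr c n xs) := by
  induction xs with
  | nil => exact Run.const _ n (fun m => rfl)
  | cons x xs ih =>
    have h := Run.step (scons (c x) (hfold xs c n)) (List.foldr c n xs) ih
    simpa [scons, hfold, Stream'.head_cons] using h
end

section
/- For the stream-model definition of zip via coroutining folds, zip xs ys equals the standard zip: run ((fold xs first []) # (fold ys second none)) = List.zip xs ys, where first x none = [], first x (some (y, xys)) = (x,y) :: xys, and second y xys = some (y, xys). -/
universe u

private lemma hfold_const {a b c : Type u} (xs : List a) (f : a → b → c)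
    (n : c) (v : b) (h : ∀ x, f x v = n) : ∀ m, hfold xs f n m v = n := by
  induction xs with
  | nil => intro m; rfl
  | cons x xs ih =>
    intro m
    cases m with
    | zero => exact h x
    | succ m => exact ih m

/-- The coroutining-fold definition of `zip` agrees with the standard `zip`:
`run ((fold xs first []) # (fold ys second none)) = List.zip xs ys`. -/
theorem run_zip {a b : Type u} (xs : List a) (ys : List b) :
    Run
      (hcomp
        (hfold xs
          (fun x o => match o with
            | none => ([] : List (a × b))
            | some (y, xys) => (x, y) :: xys)
          ([] : List (a × b)))
        (hfold ys
          (fun y xys => some (y, xys))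
          (none : Option (b × List (a × b)))))
      (List.zip xs ys) := by
  induction xs generalizing ys with
  | nil => exact Run.const _ _ fun m => rfl
  | cons x xs ih =>
    cases ys with
    | nil =>
      refine Run.const _ _ fun m => funext fun v => ?_
      show hfold (x :: xs)
          (fun x (o : Option (b × List (a × b))) => match o with
            | none => ([] : List (a × b))
            | some (y, xys) => (x, y) :: xys)
          ([] : List (a × b)) m none = []
      exact hfold_const _ _ _ none (fun _ => rfl) m
    | cons y ys => exact Run.step _ _ (ih ys)
end

section
/- In the state-machine model A, composition # is associative up to observational equivalence: for all state machines f, g, h of matching types, run-observations of (f # g) # h and f # (g # h) agree (i.e., they unfold to the same stream of functions). -/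
universe u

/-- State-machine model of hyperfunctions: a hidden state type, a step
function producing either a final value or the next function plus a new
state, and an initial state. -/
structure A (a b : Type u) : Type (u + 1) where
  σ : Type u
  step : σ → b ⊕ ((a → b) × σ)
  init : σ

namespace A

/-- Composition `#` of state machines, pairing the states. -/
def comp {a b c : Type u} (f : A b c) (g : A a b) : A a c where
  σ := f.σ × g.σ
  init := (f.init, g.init)
  step := fun p =>
    match f.step p.1 with
    | .inl n => .inl n
    | .inr (h, y) =>
      match g.step p.2 with
      | .inl m => .inl (h m)
      | .inr (h', y') => .inr (h ∘ h', (y, y'))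

end A

namespace A

/-- The sequence of states reached by a machine (or the final value,
once the machine has stopped). -/
def statesAux {a b : Type u} (m : A a b) : ℕ → b ⊕ m.σ
  | 0 => .inr m.init
  | n + 1 =>
    match statesAux m n with
    | .inl v => .inl v
    | .inr s =>
      match m.step s with
      | .inl v => .inl v
      | .inr (_, s') => .inr s'

/-- The unfolding of a machine into its observable stream: at each time `n`,
either the final value it has stopped with, or the next function it emits. -/
def obs {a b : Type u} (m : A a b) (n : ℕ) : b ⊕ (a → b) :=
  match statesAux m n with
  | .inl v => .inl v
  | .inr s =>
    match m.step s with
    | .inl v => .inl v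
    | .inr (h, _) => .inr h

end A

/-! Both composites run on triples of states, only bracketed differently. Reassociating the
state commutes with the steps, since both sides consult `f`, `g`, `h` in the same order and
function composition is definitionally associative; a state map commuting with `init` and
`step` transports the whole run, hence the observed stream. -/

namespace A

variable {a b : Type u}

structure Hom (m m' : A a b) where
  toFun : m.σ → m'.σ
  map_init : toFun m.init = m'.init
  map_step : ∀ s, m'.step (toFun s) = Sum.map id (Prod.map id toFun) (m.step s)

namespace Hom

variable {m m' : A a b}

theorem statesAux_eq (e : Hom m m') (n : ℕ) :
    m'.statesAux n = Sum.map id e.toFun (m.statesAux n) := by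
  induction n with
  | zero => simp only [statesAux, Sum.map_inr, e.map_init]
  | succ n ih =>
    rw [statesAux, statesAux, ih]
    rcases m.statesAux n with v | s
    · rfl
    · dsimp only [Sum.map_inr]
      rw [e.map_step]
      rcases m.step s with v | ⟨k, s'⟩ <;> rfl

theorem obs_eq (e : Hom m m') : m'.obs = m.obs := by
  funext n
  rw [obs, obs, e.statesAux_eq]
  rcases m.statesAux n with v | s
  · rfl
  · dsimp only [Sum.map_inr]
    rw [e.map_step]
    rcases m.step s with v | ⟨k, s'⟩ <;> rfl

end Hom

def compAssocHom {z c : Type u} (f : A b c) (g : A a b) (h : A z a) :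
    Hom (f.comp (g.comp h)) ((f.comp g).comp h) where
  toFun := fun ⟨x, y, w⟩ => ((x, y), w)
  map_init := rfl
  map_step := fun ⟨x, y, w⟩ => by
    simp only [comp]
    rcases f.step x with v | ⟨k₁, x'⟩
    · rfl
    rcases g.step y with v | ⟨k₂, y'⟩
    · rfl
    rcases h.step w with v | ⟨k₃, w'⟩ <;> rfl

end A

/-- In the state-machine model, composition is associative up to observational
equivalence: `(f # g) # h` and `f # (g # h)` unfold to the same stream. -/
theorem comp_assoc_obs {z a b c : Type u}
    (f : A b c) (g : A a b) (h : A z a) :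
    ∀ n, ((f.comp g).comp h).obs n = (f.comp (g.comp h)).obs n :=
  fun n => congrFun (A.compAssocHom f g h).obs_eq n
end
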